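/- arXiv:2302.08924 — 4 statements merged into one kernel-verified Lean document; each statement's English description precedes it below -/
import Mathlib

section
/- Theorem (MUDAN, Theorem 1): for all integers n ≥ 1 and m ≥ 1 there exist a mechanism (π, p) for the single-demand m-unit diffusion auction with n buyers and a map w* assigning to every normalized global profile θ' with Σ_i π_i(θ') ≥ 1 a buyer w*(θ') satisfying π_{w*(θ')}(θ') = 1, such that (π, p) is incentive compatible (IC), individually rational (IR), non-deficit (ND) and non-wasteful (NW), and is 1/m-weakly efficient in the following sense: for every true profile in which all n buyers are reachable and all buyers report truthfully (truthful global profile θ), SW(θ) ≥ (1/m)·(the sum of the min{m, |B*|} largest true valuations of buyers in B*), where B* is the set of buyers i for which there is a directed path from s to i in G_θ in which no vertex other than i equals w*(θ). -/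
/-!
The mechanism scans the reachable buyers by increasing bid (ties broken by index): a buyer wins
if the winners found so far, together with the higher bidders she cannot cut off from the seller,
still leave an item for her. Winning is monotone in the reported bid and in the reported neighbour
set, the crux being that a buyer who can cut off some winner below her wins outright; hence
charging every winner her critical bid gives IC and IR. The highest reachable loser sees only
winners above her, which forces exactly `min m #reachable` winners. Finally the top winner `w`
outbids everyone she cannot cut off (such a higher bidder would win too), so every buyer in `B*`
is worth at most `v w ≤ SW`, whence the `1/m` bound.
-/

open scoped Classical

/-- A single-demand report: a reported valuation and a reported neighbour set. -/
abbrev Report (ι : Type) := ℝ × Finset ι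

/-- Buyer `i` is reachable from the seller: some seller-neighbour `j` reaches `i`
through reported edges. -/
def Reachable {ι : Type} (rs : Finset ι) (θ : ι → Report ι) (i : ι) : Prop :=
  ∃ j ∈ rs, Relation.ReflTransGen (fun a b => b ∈ (θ a).2) j i

/-- Normalization of a global profile: unreachable buyers get the silent report `(0, ∅)`. -/
noncomputable def normalizeS {ι : Type} (rs : Finset ι) (θ : ι → Report ι) :
    ι → Report ι :=
  fun i => if Reachable rs θ i then θ i else (0, (∅ : Finset ι))

/-- All reported valuations are non-negative. -/
def ValidS {ι : Type} (θ : ι → Report ι) : Prop := ∀ i, 0 ≤ (θ i).1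

/-- The profile is normalized. -/
def NormalizedS {ι : Type} (rs : Finset ι) (θ : ι → Report ι) : Prop :=
  normalizeS rs θ = θ

/-- Allocation rule of a single-demand mechanism (as a 0/1 quantity in `ℕ`). -/
abbrev MechA (ι : Type) := Finset ι → (ι → Report ι) → ι → ℕ

/-- Payment rule of a single-demand mechanism. -/
abbrev MechP (ι : Type) := Finset ι → (ι → Report ι) → ι → ℝ

/-- The mechanism allocates 0/1 items per buyer and gives unreachable buyers
zero allocation and zero payment (on valid normalized profiles). -/
def ProperS {ι : Type} (A : MechA ι) (P : MechP ι) : Prop :=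
  ∀ rs θ, ValidS θ → NormalizedS rs θ → ∀ i,
    A rs θ i ≤ 1 ∧ (¬ Reachable rs θ i → A rs θ i = 0 ∧ P rs θ i = 0)

/-- Utility of buyer `i` with true valuations `v`. -/
noncomputable def utilS {ι : Type} (v : ι → ℝ) (A : MechA ι) (P : MechP ι)
    (rs : Finset ι) (θ : ι → Report ι) (i : ι) : ℝ :=
  v i * (A rs θ i : ℝ) - P rs θ i

/-- Social welfare with true valuations `v`. -/
noncomputable def SWS {ι : Type} [Fintype ι] (v : ι → ℝ) (A : MechA ι)
    (rs : Finset ι) (θ : ι → Report ι) : ℝ :=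
  ∑ i, v i * (A rs θ i : ℝ)

/-- Revenue of the seller. -/
noncomputable def RVS {ι : Type} [Fintype ι] (P : MechP ι)
    (rs : Finset ι) (θ : ι → Report ι) : ℝ :=
  ∑ i, P rs θ i

/-- Number of reachable buyers. -/
noncomputable def nReach {ι : Type} [Fintype ι] (rs : Finset ι) (θ : ι → Report ι) : ℕ :=
  (Finset.univ.filter (fun i => Reachable rs θ i)).card

/-- Incentive compatibility: truthful reporting is a dominant strategy. -/
def ICS {ι : Type} [DecidableEq ι] (A : MechA ι) (P : MechP ι) : Prop :=
  ∀ (rs : Finset ι) (v : ι → ℝ) (r : ι → Finset ι), (∀ i, 0 ≤ v i) →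
    ∀ θ : ι → Report ι, (∀ j, 0 ≤ (θ j).1 ∧ (θ j).2 ⊆ r j) →
    ∀ (i : ι) (v'' : ℝ) (r'' : Finset ι), 0 ≤ v'' → r'' ⊆ r i →
      utilS v A P rs (normalizeS rs (Function.update θ i (v i, r i))) i ≥
        utilS v A P rs (normalizeS rs (Function.update θ i (v'', r''))) i

/-- Individual rationality: a truthful buyer always gets non-negative utility. -/
def IRS {ι : Type} [DecidableEq ι] (A : MechA ι) (P : MechP ι) : Prop :=
  ∀ (rs : Finset ι) (v : ι → ℝ) (r : ι → Finset ι), (∀ i, 0 ≤ v i) →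
    ∀ θ : ι → Report ι, (∀ j, 0 ≤ (θ j).1 ∧ (θ j).2 ⊆ r j) →
    ∀ i : ι, 0 ≤ utilS v A P rs (normalizeS rs (Function.update θ i (v i, r i))) i

/-- Non-deficit: the revenue is non-negative on every valid normalized profile. -/
def NDS {ι : Type} [Fintype ι] (P : MechP ι) : Prop :=
  ∀ rs θ, ValidS θ → NormalizedS rs θ → 0 ≤ RVS P rs θ

/-- Non-wastefulness for an `m`-unit auction. -/
def NWS {ι : Type} [Fintype ι] (m : ℕ) (A : MechA ι) : Prop :=
  ∀ rs θ, ValidS θ → NormalizedS rs θ → ∑ i, A rs θ i = min m (nReach rs θ)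

/-- Sum of the `k` largest elements of a multiset of reals. -/
noncomputable def topSum (k : ℕ) (s : Multiset ℝ) : ℝ :=
  ((Multiset.sort s (· ≤ ·)).reverse.take k).sum

/-- The `r`-th largest element of a multiset of reals (1-based). -/
noncomputable def kthLargestM (s : Multiset ℝ) (r : ℕ) : ℝ :=
  (Multiset.sort s (· ≤ ·)).reverse.getD (r - 1) 0

open Finset

namespace Relation

variable {α : Type*} {r r' : α → α → Prop} {a b : α}

theorem ReflTransGen.avoiding_or (i : α) (h : ReflTransGen r a b) :
    ReflTransGen (fun x y => x ≠ i ∧ r x y) a b ∨ ReflTransGen (fun x y => x ≠ i ∧ r x y) a i := by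
  induction h with
  | refl => exact .inl .refl
  | @tail x y _ hxy ih =>
    rcases ih with ih | ih
    · by_cases hx : x = i
      · exact .inr (hx ▸ ih)
      · exact .inl (ih.tail ⟨hx, hxy⟩)
    · exact .inr ih

theorem reflTransGen_congr (h : ∀ x y, ReflTransGen r a x → (r x y ↔ r' x y)) :
    ReflTransGen r a b ↔ ReflTransGen r' a b := by
  constructor
  · intro hab
    induction hab with
    | refl => exact .refl
    | tail hax hxy ih => exact ih.tail ((h _ _ hax).1 hxy)
  · intro hab
    induction hab with
    | refl => exact .refl
    | tail _ hxy ih => exact ih.tail ((h _ _ ih).2 hxy)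

end Relation

theorem Finset.card_filter_lt_add_card_filter_gt_le {α β : Type*} [LinearOrder β] (s : Finset α)
    (f : α → β) (b : β) : #(s.filter (f · < b)) + #(s.filter (b < f ·)) ≤ #s := by
  calc _ ≤ #(s.filter (f · < b)) + #(s.filter fun x => ¬ f x < b) := by
          gcongr
          exact lt_asymm
    _ = #s := card_filter_add_card_filter_not _

theorem Finset.card_filter_lt_le_of_forall {α β : Type*} [LinearOrder β] {f : α → β}
    (hf : Function.Injective f) {A B : Finset α}
    (h : ∀ y ∈ A, y ∈ B ∨ #(A.filter (f · < f y)) < #(B.filter (f · < f y))) (b : β) :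
    #(A.filter (f · < b)) ≤ #(B.filter (f · < b)) := by
  induction hn : #(A.filter (f · < b)) using Nat.strong_induction_on generalizing b with
  | _ n ih =>
  rcases (A.filter (f · < b)).eq_empty_or_nonempty with he | hne
  · simp [← hn, he]
  obtain ⟨y, hy, hmax⟩ := (A.filter (f · < b)).exists_max_image f hne
  obtain ⟨hyA, hyb⟩ := mem_filter.1 hy
  have hsplit : A.filter (f · < b) = insert y (A.filter (f · < f y)) := by
    ext x
    simp only [mem_filter, mem_insert]
    refine ⟨fun hx => (eq_or_ne x y).imp_right fun hxy =>
      ⟨hx.1, (hmax x (mem_filter.2 hx)).lt_of_ne (hf.ne hxy)⟩, ?_⟩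
    rintro (rfl | hx)
    · exact ⟨hyA, hyb⟩
    · exact ⟨hx.1, hx.2.trans hyb⟩
  have hcard : #(A.filter (f · < b)) = #(A.filter (f · < f y)) + 1 := by
    rw [hsplit, card_insert_of_notMem fun h => (mem_filter.1 h).2.false]
  have hBmono : B.filter (f · < f y) ⊆ B.filter (f · < b) :=
    monotone_filter_right B fun _ _ hx => hx.trans hyb
  rcases h y hyA with hyB | hlt
  · have hsub : insert y (B.filter (f · < f y)) ⊆ B.filter (f · < b) :=
      insert_subset (mem_filter.2 ⟨hyB, hyb⟩) hBmono
    have := card_le_card hsub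
    rw [card_insert_of_notMem fun h => (mem_filter.1 h).2.false] at this
    have := ih _ (by omega) (f y) rfl
    omega
  · have := card_le_card hBmono
    omega

/-- Truthfulness of critical-value payments: `T` is the set of winning bids of a buyer, `D ⊆ T`
the set of winning bids after a deviation in the rest of her report. -/
theorem ite_sub_sInf_le_ite_sub_sInf {T D : Set ℝ} (hT : IsUpperSet T) (hTb : BddBelow T)
    (hDT : D ⊆ T) (v b : ℝ) :
    (if b ∈ D then v - sInf D else 0) ≤ if v ∈ T then v - sInf T else 0 := by
  by_cases hb : b ∈ D <;> by_cases hv : v ∈ T <;> simp only [hb, hv, if_true, if_false]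
  · linarith [csInf_le_csInf hTb ⟨b, hb⟩ hDT]
  · refine sub_nonpos.2 (not_lt.1 fun hlt => hv ?_)
    obtain ⟨c, hc, hcv⟩ := exists_lt_of_csInf_lt ⟨b, hb⟩ hlt
    exact hT hcv.le (hDT hc)
  · linarith [csInf_le hTb hv]
  · exact le_rfl

theorem topSum_zero (s : Multiset ℝ) : topSum 0 s = 0 := by simp [topSum]

theorem topSum_le_mul {k : ℕ} {s : Multiset ℝ} {M : ℝ} (hM : 0 ≤ M) (h : ∀ x ∈ s, x ≤ M) :
    topSum k s ≤ k * M := by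
  set l := ((Multiset.sort s (· ≤ ·)).reverse.take k)
  have hl : ∀ x ∈ l, x ≤ M := fun x hx =>
    h x ((Multiset.mem_sort _).1 (List.mem_reverse.1 (List.mem_of_mem_take hx)))
  calc topSum k s = l.sum := rfl
    _ ≤ l.length • M := List.sum_le_card_nsmul l M hl
    _ ≤ k * M := by
      rw [nsmul_eq_mul]
      gcongr
      exact_mod_cast List.length_take_le k _

section Reachability

variable {ι : Type} {rs : Finset ι} {θ θ' : ι → Report ι} {i j x y : ι}

def ReachableAvoiding (rs : Finset ι) (θ : ι → Report ι) (i x : ι) : Prop :=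
  ∃ j ∈ rs, Relation.ReflTransGen (fun a b => a ≠ i ∧ b ∈ (θ a).2) j x

theorem Reachable.mono (h : ∀ a, (θ a).2 ⊆ (θ' a).2) (hx : Reachable rs θ x) :
    Reachable rs θ' x := by
  obtain ⟨j, hj, hp⟩ := hx
  exact ⟨j, hj, Relation.ReflTransGen.mono (fun a b hab => h a hab) _ _ hp⟩

theorem reachable_congr (h : ∀ a, (θ a).2 = (θ' a).2) : Reachable rs θ x ↔ Reachable rs θ' x :=
  ⟨.mono fun a => (h a).subset, .mono fun a => (h a).symm.subset⟩

theorem ReachableAvoiding.mono (h : ∀ a ≠ i, (θ a).2 ⊆ (θ' a).2)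
    (hx : ReachableAvoiding rs θ i x) : ReachableAvoiding rs θ' i x := by
  obtain ⟨j, hj, hp⟩ := hx
  exact ⟨j, hj, Relation.ReflTransGen.mono (fun a b hab => ⟨hab.1, h a hab.1 hab.2⟩) _ _ hp⟩

theorem reachableAvoiding_congr (h : ∀ a ≠ i, (θ a).2 = (θ' a).2) :
    ReachableAvoiding rs θ i x ↔ ReachableAvoiding rs θ' i x :=
  ⟨.mono fun a ha => (h a ha).subset, .mono fun a ha => (h a ha).symm.subset⟩

theorem ReachableAvoiding.reachable (hx : ReachableAvoiding rs θ i x) : Reachable rs θ x := by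
  obtain ⟨j, hj, hp⟩ := hx
  exact ⟨j, hj, Relation.ReflTransGen.mono (fun _ _ hab => hab.2) _ _ hp⟩

theorem Reachable.reachableAvoiding_or (hx : Reachable rs θ x) (i : ι) :
    ReachableAvoiding rs θ i x ∨ ReachableAvoiding rs θ i i := by
  obtain ⟨j, hj, hp⟩ := hx
  exact (hp.avoiding_or i).imp (⟨j, hj, ·⟩) (⟨j, hj, ·⟩)

theorem Reachable.reachableAvoiding_of_not (hx : Reachable rs θ x)
    (h : ¬ ReachableAvoiding rs θ y x) :
    ReachableAvoiding rs θ x y := by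
  obtain ⟨j, hj, hp⟩ := (hx.reachableAvoiding_or y).resolve_left h
  rcases hp.avoiding_or x with hp | hp
  · exact ⟨j, hj, Relation.ReflTransGen.mono (fun _ _ hab => ⟨hab.1, hab.2.2⟩) _ _ hp⟩
  · exact absurd ⟨j, hj, Relation.ReflTransGen.mono (fun _ _ hab => hab.2) _ _ hp⟩ h

theorem ReachableAvoiding.of_not_reachableAvoiding (hj : ¬ ReachableAvoiding rs θ i j)
    (hx : ReachableAvoiding rs θ i x) : ReachableAvoiding rs θ j x := by
  obtain ⟨j₀, hj₀, hp⟩ := hx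
  refine ⟨j₀, hj₀, ?_⟩
  induction hp with
  | refl => exact .refl
  | @tail b c hb hbc ih => exact ih.tail ⟨fun hbj => hj ⟨j₀, hj₀, hbj ▸ hb⟩, hbc.2⟩

def AgreeOnReachable (rs : Finset ι) (θ θ' : ι → Report ι) : Prop :=
  ∀ a, Reachable rs θ a → θ' a = θ a

theorem AgreeOnReachable.reachable_iff (h : AgreeOnReachable rs θ θ') :
    Reachable rs θ x ↔ Reachable rs θ' x := by
  refine exists_congr fun j => and_congr_right fun hj => Relation.reflTransGen_congr ?_
  intro a b ha
  rw [h a ⟨j, hj, ha⟩]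

theorem AgreeOnReachable.reachableAvoiding_iff (h : AgreeOnReachable rs θ θ') :
    ReachableAvoiding rs θ i x ↔ ReachableAvoiding rs θ' i x := by
  refine exists_congr fun j => and_congr_right fun hj => Relation.reflTransGen_congr ?_
  intro a b ha
  rw [h a (ReachableAvoiding.reachable ⟨j, hj, ha⟩)]

theorem agreeOnReachable_normalizeS (rs : Finset ι) (θ : ι → Report ι) :
    AgreeOnReachable rs θ (normalizeS rs θ) :=
  fun _ ha => if_pos ha

theorem AgreeOnReachable.update_bid [DecidableEq ι] (h : AgreeOnReachable rs θ θ') (c : ℝ) :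
    AgreeOnReachable rs (Function.update θ i (c, (θ i).2))
      (Function.update θ' i (c, (θ' i).2)) := by
  have hedge : ∀ a, (Function.update θ i (c, (θ i).2) a).2 = (θ a).2 := fun a => by
    by_cases ha : a = i <;> simp [ha]
  intro a ha
  have ha' := (reachable_congr hedge).1 ha
  by_cases hai : a = i
  · subst hai; simp [h a ha']
  · simp [hai, h a ha']

end Reachability

section Winners

variable {ι : Type} {rs : Finset ι} {θ ψ φ : ι → Report ι} {m : ℕ} {i j x y : ι}

def bidKey (θ : ι → Report ι) (x : ι) : ℝ ×ₗ ι := toLex ((θ x).1, x)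

theorem bidKey_injective (θ : ι → Report ι) : Function.Injective (bidKey θ) :=
  fun _ _ h => congrArg (fun p : ℝ ×ₗ ι => (ofLex p).2) h

theorem bidKey_congr (hbid : ∀ a, (ψ a).1 = (φ a).1) : bidKey ψ = bidKey φ :=
  funext fun a => by simp [bidKey, hbid]

variable [LinearOrder ι]

theorem exists_bidKey_max {s : Finset ι} (hs : s.Nonempty) :
    ∃ w ∈ s, ∀ x ∈ s, x ≠ w → bidKey θ x < bidKey θ w := by
  obtain ⟨w, hw, hmax⟩ := s.exists_max_image (bidKey θ) hs
  exact ⟨w, hw, fun x hx hxw => (hmax x hx).lt_of_ne ((bidKey_injective θ).ne hxw)⟩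

variable [Fintype ι]

theorem wellFounded_bidKey (θ : ι → Report ι) :
    WellFounded (fun x y => bidKey θ x < bidKey θ y) :=
  Finite.wellFounded_of_trans_of_irrefl (InvImage (· < ·) (bidKey θ))

noncomputable def visible (rs : Finset ι) (θ : ι → Report ι) (i : ι) : Finset ι :=
  univ.filter fun x => x ≠ i ∧ ReachableAvoiding rs θ i x

noncomputable def visibleAbove (rs : Finset ι) (θ : ι → Report ι) (i : ι) : Finset ι :=
  (visible rs θ i).filter fun x => bidKey θ i < bidKey θ x

/-- Scanning buyers by increasing bid, `j` wins iff it is reachable and the winners found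
so far plus the higher bidders it cannot cut off leave an item for it. -/
def IsWinner (m : ℕ) (rs : Finset ι) (θ : ι → Report ι) : ι → Prop :=
  (wellFounded_bidKey θ).fix fun j IH =>
    Reachable rs θ j ∧
      #(univ.filter fun y => ∃ h : bidKey θ y < bidKey θ j, IH y h) + #(visibleAbove rs θ j) < m

noncomputable def winners (m : ℕ) (rs : Finset ι) (θ : ι → Report ι) : Finset ι :=
  univ.filter (IsWinner m rs θ)

noncomputable def winnersBelow (m : ℕ) (rs : Finset ι) (θ : ι → Report ι) (j : ι) : Finset ι :=
  (winners m rs θ).filter fun y => bidKey θ y < bidKey θ j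

theorem isWinner_iff : IsWinner m rs θ j ↔
    Reachable rs θ j ∧ #(winnersBelow m rs θ j) + #(visibleAbove rs θ j) < m := by
  rw [IsWinner, WellFounded.fix_eq]
  have : (univ.filter fun y => ∃ h : bidKey θ y < bidKey θ j, IsWinner m rs θ y) =
      winnersBelow m rs θ j := by
    ext y; simp [winnersBelow, winners, and_comm]
  exact and_congr_right fun _ => by rw [← this]; rfl

theorem mem_winners : y ∈ winners m rs θ ↔ IsWinner m rs θ y := by simp [winners]

theorem IsWinner.reachable (h : IsWinner m rs θ j) : Reachable rs θ j :=
  (isWinner_iff.1 h).1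

theorem mem_visible : x ∈ visible rs θ i ↔ x ≠ i ∧ ReachableAvoiding rs θ i x := by
  simp [visible]

noncomputable def reachableSet (rs : Finset ι) (θ : ι → Report ι) : Finset ι :=
  univ.filter (Reachable rs θ)

theorem winners_subset_reachableSet : winners m rs θ ⊆ reachableSet rs θ := fun _ hx => by
  simpa [reachableSet] using (mem_winners.1 hx).reachable

theorem winnersBelow_eq_erase {w : ι}
    (hmax : ∀ x ∈ winners m rs θ, x ≠ w → bidKey θ x < bidKey θ w) :
    winnersBelow m rs θ w = (winners m rs θ).erase w := by
  ext x
  simp only [winnersBelow, mem_filter, mem_erase]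
  exact ⟨fun h => ⟨fun hxw => (hxw ▸ h.2).false, h.1⟩, fun h => ⟨h.2, hmax x h.2 h.1⟩⟩

theorem card_winners_le : #(winners m rs θ) ≤ m := by
  rcases (winners m rs θ).eq_empty_or_nonempty with h | h
  · simp [h]
  obtain ⟨w, hw, hmax⟩ := exists_bidKey_max (θ := θ) h
  have hwin := isWinner_iff.1 (mem_winners.1 hw)
  rw [winnersBelow_eq_erase hmax, card_erase_of_mem hw] at hwin
  have := card_pos.2 h
  omega

/-- Everyone visible above the highest-bidding reachable loser wins, so the count that made it
lose is at most the number of winners. -/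
theorem le_card_winners (hz : Reachable rs θ x) (hx : ¬ IsWinner m rs θ x) :
    m ≤ #(winners m rs θ) := by
  have hne : (reachableSet rs θ \ winners m rs θ).Nonempty :=
    ⟨x, by simp [reachableSet, winners, hz, hx]⟩
  obtain ⟨z, hz, hmax⟩ := exists_bidKey_max (θ := θ) hne
  simp only [reachableSet, winners, mem_sdiff, mem_filter, mem_univ, true_and] at hz hmax
  have habove : visibleAbove rs θ z ⊆ (winners m rs θ).filter (bidKey θ z < bidKey θ ·) := by
    intro y hy
    simp only [visibleAbove, mem_visible, mem_filter] at hy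
    refine mem_filter.2 ⟨mem_winners.2 (not_not.1 fun hyw => ?_), hy.2⟩
    exact (hmax y ⟨hy.1.2.reachable, hyw⟩ hy.1.1).asymm hy.2
  have hlose : m ≤ #(winnersBelow m rs θ z) + #(visibleAbove rs θ z) := by
    by_contra h
    exact hz.2 (isWinner_iff.2 ⟨hz.1, by omega⟩)
  calc m ≤ #(winnersBelow m rs θ z) + #(visibleAbove rs θ z) := hlose
    _ ≤ #((winners m rs θ).filter (bidKey θ · < bidKey θ z)) +
        #((winners m rs θ).filter (bidKey θ z < bidKey θ ·)) := by
      exact add_le_add le_rfl (card_le_card habove)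
    _ ≤ #(winners m rs θ) :=
      card_filter_lt_add_card_filter_gt_le (winners m rs θ) (bidKey θ) (bidKey θ z)

theorem card_winners : #(winners m rs θ) = min m #(reachableSet rs θ) := by
  by_cases h : ∃ x, Reachable rs θ x ∧ ¬ IsWinner m rs θ x
  · obtain ⟨x, hx, hxw⟩ := h
    have := le_card_winners hx hxw
    have := card_le_card (winners_subset_reachableSet (m := m) (rs := rs) (θ := θ))
    have := card_winners_le (m := m) (rs := rs) (θ := θ)
    omega
  · simp only [not_exists, not_and, not_not] at h
    have heq : winners m rs θ = reachableSet rs θ :=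
      winners_subset_reachableSet.antisymm fun x hx => by
        simpa [winners, reachableSet] using h x (by simpa [reachableSet] using hx)
    rw [heq, min_eq_right (heq ▸ card_winners_le)]

/-- A visible loser above the top winner would force `m` winners and leave no item for the top
winner. -/
theorem mem_winners_of_mem_visibleAbove {w : ι} (hw : w ∈ winners m rs θ)
    (hmax : ∀ x ∈ winners m rs θ, x ≠ w → bidKey θ x < bidKey θ w)
    (hx : x ∈ visibleAbove rs θ w) : x ∈ winners m rs θ := by
  by_contra hxw
  have hx' := mem_filter.1 hx
  have hm := le_card_winners ((mem_visible.1 hx'.1).2.reachable) (mt mem_winners.2 hxw)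
  have hwin := isWinner_iff.1 (mem_winners.1 hw)
  rw [winnersBelow_eq_erase hmax, card_erase_of_mem hw] at hwin
  have := card_pos.2 ⟨x, hx⟩
  have := card_winners_le (m := m) (rs := rs) (θ := θ)
  omega

noncomputable def topWinner (default : ι) (m : ℕ) (rs : Finset ι) (θ : ι → Report ι) : ι :=
  if h : (winners m rs θ).Nonempty then (exists_bidKey_max (θ := θ) h).choose else default

theorem topWinner_spec {d : ι} (h : (winners m rs θ).Nonempty) :
    topWinner d m rs θ ∈ winners m rs θ ∧
      ∀ x ∈ winners m rs θ, x ≠ topWinner d m rs θ →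
        bidKey θ x < bidKey θ (topWinner d m rs θ) := by
  rw [topWinner, dif_pos h]
  exact (exists_bidKey_max h).choose_spec

theorem bid_le_topWinner {d : ι} (h : (winners m rs θ).Nonempty)
    (hx : ReachableAvoiding rs θ (topWinner d m rs θ) x) :
    (θ x).1 ≤ (θ (topWinner d m rs θ)).1 := by
  obtain ⟨hw, hmax⟩ := topWinner_spec (d := d) h
  suffices bidKey θ x ≤ bidKey θ (topWinner d m rs θ) from
    Prod.Lex.monotone_fst (bidKey θ x) (bidKey θ _) this
  by_cases hxw : x = topWinner d m rs θ
  · rw [hxw]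
  refine not_lt.1 fun hlt => ?_
  have hxW := mem_winners_of_mem_visibleAbove hw hmax (mem_filter.2 ⟨mem_visible.2 ⟨hxw, hx⟩, hlt⟩)
  exact (hmax x hxW hxw).asymm hlt

noncomputable def visibleBetween (rs : Finset ι) (θ : ι → Report ι) (i y : ι) : Finset ι :=
  (visible rs θ i).filter fun x => bidKey θ y < bidKey θ x ∧ bidKey θ x < bidKey θ i

theorem card_winnersBelow_le_add_card_visibleBetween
    (h : ∀ x ∈ winnersBelow m rs θ i, bidKey θ y < bidKey θ x → x ∈ visible rs θ i) :
    #(winnersBelow m rs θ i) ≤ #(winnersBelow m rs θ y) + 1 + #(visibleBetween rs θ i y) := by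
  have hsub : winnersBelow m rs θ i ⊆
      winnersBelow m rs θ y ∪ insert y (visibleBetween rs θ i y) := by
    intro x hx
    obtain ⟨hxW, hxi⟩ := mem_filter.1 hx
    rcases lt_trichotomy (bidKey θ x) (bidKey θ y) with hxy | hxy | hxy
    · exact mem_union_left _ (mem_filter.2 ⟨hxW, hxy⟩)
    · exact mem_union_right _ (mem_insert.2 (.inl (bidKey_injective θ hxy)))
    · exact mem_union_right _ (mem_insert_of_mem (mem_filter.2 ⟨h x hx hxy, hxy, hxi⟩))
  calc _ ≤ _ := card_le_card hsub
    _ ≤ _ := card_union_le _ _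
    _ ≤ _ := by have := card_insert_le y (visibleBetween rs θ i y); omega

/-- If `i` can cut `y` off, then `y` cannot cut off `i` nor anything visible to `i`. -/
theorem card_visibleBetween_add_card_visibleAbove_lt (hy : Reachable rs θ y)
    (hyi : bidKey θ y < bidKey θ i) (hcut : ¬ ReachableAvoiding rs θ i y) :
    #(visibleBetween rs θ i y) + #(visibleAbove rs θ i) < #(visibleAbove rs θ y) := by
  have hyne : y ≠ i := fun h => (h ▸ hyi).false
  have hsub : insert i (visibleBetween rs θ i y ∪ visibleAbove rs θ i) ⊆ visibleAbove rs θ y := by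
    intro x hx
    rcases mem_insert.1 hx with hxi | hx
    · rw [hxi]
      exact mem_filter.2 ⟨mem_visible.2 ⟨hyne.symm, hy.reachableAvoiding_of_not hcut⟩, hyi⟩
    have hxV : x ∈ visible rs θ i := by
      rcases mem_union.1 hx with hx | hx <;> exact (mem_filter.1 hx).1
    have hyx : bidKey θ y < bidKey θ x := by
      rcases mem_union.1 hx with hx | hx
      · exact (mem_filter.1 hx).2.1
      · exact hyi.trans (mem_filter.1 hx).2
    exact mem_filter.2 ⟨mem_visible.2 ⟨fun h => (h ▸ hyx).false,
      (mem_visible.1 hxV).2.of_not_reachableAvoiding hcut⟩, hyx⟩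
  have hi : i ∉ visibleBetween rs θ i y ∪ visibleAbove rs θ i := fun h => by
    rcases mem_union.1 h with h | h <;> exact (mem_visible.1 (mem_filter.1 h).1).1 rfl
  have hdisj : Disjoint (visibleBetween rs θ i y) (visibleAbove rs θ i) :=
    disjoint_filter.2 fun _ _ h₁ h₂ => h₁.2.asymm h₂
  have := card_le_card hsub
  rw [card_insert_of_notMem hi, card_union_of_disjoint hdisj] at this
  omega

/-- Take the highest winner `y` below `i` that `i` can cut off: the winners between `y` and `i`
are visible to `i`, and `y` sees all of them, `i`, and everything above `i` that `i` sees. -/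
theorem isWinner_of_invisible_winnerBelow (hi : Reachable rs θ i)
    (hy : ∃ y ∈ winnersBelow m rs θ i, y ∉ visible rs θ i) : IsWinner m rs θ i := by
  obtain ⟨y, hyS, hmax⟩ := exists_bidKey_max (θ := θ)
    (s := (winnersBelow m rs θ i).filter (· ∉ visible rs θ i)) (by simpa [Finset.Nonempty] using hy)
  obtain ⟨hyB, hyV⟩ := mem_filter.1 hyS
  have hyi : bidKey θ y < bidKey θ i := (mem_filter.1 hyB).2
  have hwin := isWinner_iff.1 (mem_winners.1 (mem_filter.1 hyB).1)
  have hbelow := card_winnersBelow_le_add_card_visibleBetween (m := m) (y := y) fun x hx hyx =>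
    not_not.1 fun hxV => (hmax x (mem_filter.2 ⟨hx, hxV⟩) fun h => (h ▸ hyx).false).asymm hyx
  have habove := card_visibleBetween_add_card_visibleAbove_lt hwin.1 hyi
    fun h => hyV (mem_visible.2 ⟨fun h' => (h' ▸ hyi).false, h⟩)
  exact isWinner_iff.2 ⟨hi, by omega⟩

theorem IsWinner.of_card_le (h : IsWinner m rs φ y) (hy : Reachable rs θ y)
    (hk : #(winnersBelow m rs θ y) ≤ #(winnersBelow m rs φ y))
    (hv : #(visibleAbove rs θ y) ≤ #(visibleAbove rs φ y)) : IsWinner m rs θ y := by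
  have := (isWinner_iff.1 h).2
  exact isWinner_iff.2 ⟨hy, by omega⟩

theorem AgreeOnReachable.isWinner_iff (h : AgreeOnReachable rs θ φ) :
    IsWinner m rs θ j ↔ IsWinner m rs φ j := by
  induction j using (wellFounded_bidKey θ).induction with
  | _ j ih =>
  have hkey : ∀ x, Reachable rs θ x → bidKey θ x = bidKey φ x := fun x hx => by
    simp [bidKey, h x hx]
  have hlose : ∀ x, ¬ Reachable rs θ x → ¬ IsWinner m rs θ x ∧ ¬ IsWinner m rs φ x :=
    fun x hx => ⟨fun hw => hx hw.reachable, fun hw => hx (h.reachable_iff.2 hw.reachable)⟩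
  by_cases hj : Reachable rs θ j
  swap
  · exact iff_of_false (hlose j hj).1 (hlose j hj).2
  have hbelow : winnersBelow m rs θ j = winnersBelow m rs φ j := by
    ext z
    simp only [winnersBelow, mem_filter, mem_winners]
    by_cases hz : Reachable rs θ z
    · rw [← hkey z hz, ← hkey j hj]
      exact and_congr_left fun hzj => ih z hzj
    · exact iff_of_false (fun hw => (hlose z hz).1 hw.1) (fun hw => (hlose z hz).2 hw.1)
  have habove : visibleAbove rs θ j = visibleAbove rs φ j := by
    ext x
    simp only [visibleAbove, mem_filter, mem_visible, h.reachableAvoiding_iff]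
    refine and_congr_right fun hx => ?_
    rw [hkey j hj, hkey x (h.reachableAvoiding_iff.2 hx.2).reachable]
  rw [_root_.isWinner_iff, _root_.isWinner_iff, hbelow, habove, h.reachable_iff]

end Winners

section Monotonicity

variable {ι : Type} [LinearOrder ι] [Fintype ι] {rs : Finset ι} {θ ψ φ φ' : ι → Report ι}
  {m : ℕ} {i : ι}

theorem visibleAbove_subset_of_edges_subset (hbid : ∀ a, (ψ a).1 = (φ a).1)
    (hsub : ∀ a, (ψ a).2 ⊆ (φ a).2) (y : ι) : visibleAbove rs ψ y ⊆ visibleAbove rs φ y := by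
  intro x hx
  obtain ⟨hxV, hlt⟩ := mem_filter.1 hx
  obtain ⟨hxy, hx⟩ := mem_visible.1 hxV
  exact mem_filter.2 ⟨mem_visible.2 ⟨hxy, hx.mono fun a _ => hsub a⟩, bidKey_congr hbid ▸ hlt⟩

/-- A visible winner of `φ` either wins in `ψ` too or has fewer winners below it in `φ` than
in `ψ`. -/
theorem card_filter_winners_visible_le (hbid : ∀ a, (ψ a).1 = (φ a).1)
    (hsub : ∀ a, (ψ a).2 ⊆ (φ a).2) (hvis : ∀ y ∈ visible rs φ i, Reachable rs ψ y) (b : ℝ ×ₗ ι) :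
    #(((winners m rs φ).filter (· ∈ visible rs φ i)).filter (bidKey φ · < b)) ≤
      #((winners m rs ψ).filter (bidKey φ · < b)) := by
  have hbelow : ∀ y, winnersBelow m rs ψ y = (winners m rs ψ).filter (bidKey φ · < bidKey φ y) :=
    fun y => by rw [winnersBelow, bidKey_congr hbid]
  refine card_filter_lt_le_of_forall (bidKey_injective φ) (fun y hy => ?_) b
  obtain ⟨hyW, hyV⟩ := mem_filter.1 hy
  have hAy : #(((winners m rs φ).filter (· ∈ visible rs φ i)).filter (bidKey φ · < bidKey φ y)) ≤
      #(winnersBelow m rs φ y) :=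
    card_le_card fun x hx => by
      simp only [winnersBelow, mem_filter] at hx ⊢
      exact ⟨hx.1.1, hx.2⟩
  rw [← hbelow]
  by_cases hlt : #(winnersBelow m rs φ y) < #(winnersBelow m rs ψ y)
  · exact .inr (hAy.trans_lt hlt)
  exact .inl (mem_winners.2 ((mem_winners.1 hyW).of_card_le (hvis y hyV) (not_lt.1 hlt)
    (card_le_card (visibleAbove_subset_of_edges_subset hbid hsub y))))

/-- The winners below `i` are visible to `i` (otherwise `i` wins anyway), and there are no more
of them than winners below `i` in `ψ`. -/
theorem IsWinner.of_edges_subset (hbid : ∀ a, (ψ a).1 = (φ a).1)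
    (hsub : ∀ a, (ψ a).2 ⊆ (φ a).2) (hother : ∀ a ≠ i, (φ a).2 ⊆ (ψ a).2)
    (hwin : IsWinner m rs ψ i) : IsWinner m rs φ i := by
  have hvis : visible rs ψ i = visible rs φ i := by
    ext x
    simp only [mem_visible, reachableAvoiding_congr fun a ha => (hsub a).antisymm (hother a ha)]
  have hiR : Reachable rs φ i := hwin.reachable.mono hsub
  by_cases hZ : ∃ y ∈ winnersBelow m rs φ i, y ∉ visible rs φ i
  · exact isWinner_of_invisible_winnerBelow hiR hZ
  simp only [not_exists, not_and, not_not] at hZ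
  have hk := card_filter_winners_visible_le (m := m) hbid hsub
    (fun y hy => (mem_visible.1 (hvis ▸ hy)).2.reachable) (bidKey φ i)
  refine hwin.of_card_le hiR ?_ ?_
  · rw [winnersBelow, winnersBelow, bidKey_congr hbid]
    refine le_trans (card_le_card fun x hx => ?_) hk
    exact mem_filter.2 ⟨mem_filter.2 ⟨(mem_filter.1 hx).1, hZ x hx⟩, (mem_filter.1 hx).2⟩
  · simp only [visibleAbove, hvis, bidKey_congr hbid, le_refl]

theorem isWinner_update_of_subset {b : ℝ} {e e' : Finset ι} (he : e ⊆ e')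
    (h : IsWinner m rs (Function.update θ i (b, e)) i) :
    IsWinner m rs (Function.update θ i (b, e')) i := by
  refine h.of_edges_subset (fun a => ?_) (fun a => ?_) (fun a ha => ?_)
  · by_cases ha : a = i <;> simp [ha]
  · by_cases ha : a = i <;> simp [ha, he]
  · simp [ha]

theorem visible_congr (hedge : ∀ a, (φ a).2 = (φ' a).2) (y : ι) :
    visible rs φ y = visible rs φ' y := by
  ext x
  simp only [mem_visible, reachableAvoiding_congr fun a _ => hedge a]

theorem isWinner_iff_of_lt_raise (hedge : ∀ a, (φ a).2 = (φ' a).2)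
    (hkey : ∀ x ≠ i, bidKey φ x = bidKey φ' x) (hi : bidKey φ i < bidKey φ' i) (y : ι) :
    bidKey φ y < bidKey φ i → (IsWinner m rs φ y ↔ IsWinner m rs φ' y) := by
  induction y using (wellFounded_bidKey φ).induction with
  | _ y ih =>
  intro hyi
  have hy : y ≠ i := fun h => (h ▸ hyi).false
  have hbelow : winnersBelow m rs φ y = winnersBelow m rs φ' y := by
    ext z
    simp only [winnersBelow, mem_filter, mem_winners]
    by_cases hz : z = i
    · subst hz
      refine iff_of_false (fun h => h.2.asymm hyi) fun h => ?_
      exact (h.2.trans (hkey y hy ▸ hyi |>.trans hi)).false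
    rw [← hkey z hz, ← hkey y hy]
    exact and_congr_left fun hzy => ih z hzy (hzy.trans hyi)
  have habove : visibleAbove rs φ y = visibleAbove rs φ' y := by
    ext x
    simp only [visibleAbove, mem_filter, visible_congr hedge y]
    refine and_congr_right fun _ => ?_
    by_cases hx : x = i
    · subst hx
      exact iff_of_true hyi (hkey y hy ▸ hyi.trans hi)
    rw [hkey x hx, hkey y hy]
  rw [isWinner_iff, isWinner_iff, hbelow, habove, reachable_congr hedge]

/-- After raising its bid, `i` overtakes some buyers; those that win were visible to `i`
(otherwise `i` wins anyway), so each of them moves from `i`'s higher-bidder count to its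
winner count. -/
theorem IsWinner.of_raise (hedge : ∀ a, (φ a).2 = (φ' a).2)
    (hkey : ∀ x ≠ i, bidKey φ x = bidKey φ' x) (hi : bidKey φ i < bidKey φ' i)
    (hwin : IsWinner m rs φ i) : IsWinner m rs φ' i := by
  have hiR : Reachable rs φ' i := hwin.reachable.mono fun a => (hedge a).subset
  by_cases hZ : ∃ y ∈ winnersBelow m rs φ' i, y ∉ visible rs φ' i
  · exact isWinner_of_invisible_winnerBelow hiR hZ
  simp only [not_exists, not_and, not_not] at hZ
  set C := (visible rs φ' i).filter fun x => bidKey φ i < bidKey φ x ∧ bidKey φ' x < bidKey φ' i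
  have hbelow : winnersBelow m rs φ' i ⊆ winnersBelow m rs φ i ∪ C := by
    intro y hy
    obtain ⟨hyW, hyi⟩ := mem_filter.1 hy
    have hyne : y ≠ i := fun h => (h ▸ hyi).false
    rcases lt_or_gt_of_ne ((bidKey_injective φ).ne hyne) with h | h
    · exact mem_union_left _ (mem_filter.2 ⟨mem_winners.2
        ((isWinner_iff_of_lt_raise hedge hkey hi y h).2 (mem_winners.1 hyW)), h⟩)
    · exact mem_union_right _ (mem_filter.2 ⟨hZ y hy, h, hyi⟩)
  have habove : C ∪ visibleAbove rs φ' i ⊆ visibleAbove rs φ i := by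
    intro x hx
    rw [visibleAbove, visible_congr hedge]
    rcases mem_union.1 hx with hx | hx
    · exact mem_filter.2 ⟨(mem_filter.1 hx).1, (mem_filter.1 hx).2.1⟩
    obtain ⟨hxV, hix⟩ := mem_filter.1 hx
    refine mem_filter.2 ⟨hxV, ?_⟩
    rw [hkey x (mem_visible.1 hxV).1]
    exact hi.trans hix
  have hdisj : Disjoint C (visibleAbove rs φ' i) :=
    disjoint_filter.2 fun _ _ h₁ h₂ => h₁.2.asymm h₂
  have h₁ := (card_le_card hbelow).trans (card_union_le _ _)
  have h₂ := card_le_card habove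
  rw [card_union_of_disjoint hdisj] at h₂
  have := (isWinner_iff.1 hwin).2
  exact isWinner_iff.2 ⟨hiR, by omega⟩

theorem isWinner_update_of_lt {θ : ι → Report ι} {b b' : ℝ} {e : Finset ι} (hb : b < b')
    (h : IsWinner m rs (Function.update θ i (b, e)) i) :
    IsWinner m rs (Function.update θ i (b', e)) i := by
  refine h.of_raise (fun a => ?_) (fun x hx => by simp [bidKey, hx]) ?_
  · by_cases ha : a = i <;> simp [ha]
  · simp [bidKey, Prod.Lex.toLex_lt_toLex, hb]

end Monotonicity

section Mechanism

variable {ι : Type} [LinearOrder ι] [Fintype ι] {rs : Finset ι} {θ θ' : ι → Report ι}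
  {m : ℕ} {i : ι}

def winRegion (m : ℕ) (rs : Finset ι) (θ : ι → Report ι) (i : ι) : Set ℝ :=
  {c | 0 ≤ c ∧ IsWinner m rs (Function.update θ i (c, (θ i).2)) i}

noncomputable def critBid (m : ℕ) (rs : Finset ι) (θ : ι → Report ι) (i : ι) : ℝ :=
  sInf (winRegion m rs θ i)

theorem AgreeOnReachable.winRegion_eq (h : AgreeOnReachable rs θ θ') :
    winRegion m rs θ i = winRegion m rs θ' i := by
  ext c
  exact and_congr_right fun _ => (h.update_bid c).isWinner_iff

theorem winRegion_update (b : ℝ) (e : Finset ι) :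
    winRegion m rs (Function.update θ i (b, e)) i =
      {c | 0 ≤ c ∧ IsWinner m rs (Function.update θ i (c, e)) i} := by
  simp [winRegion]

theorem mem_winRegion_self (hi : 0 ≤ (θ i).1) :
    (θ i).1 ∈ winRegion m rs θ i ↔ IsWinner m rs θ i := by
  simp [winRegion, hi]

theorem isUpperSet_winRegion : IsUpperSet (winRegion m rs θ i) := by
  rintro c c' hcc' ⟨hc, hw⟩
  refine ⟨hc.trans hcc', ?_⟩
  rcases hcc'.lt_or_eq with hlt | rfl
  · exact isWinner_update_of_lt hlt hw
  · exact hw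

theorem bddBelow_winRegion : BddBelow (winRegion m rs θ i) := ⟨0, fun _ hc => hc.1⟩

theorem critBid_nonneg : 0 ≤ critBid m rs θ i := Real.sInf_nonneg fun _ hc => hc.1

noncomputable def mudanAlloc (m : ℕ) : MechA ι :=
  fun rs θ i => if IsWinner m rs θ i then 1 else 0

noncomputable def mudanPay (m : ℕ) : MechP ι :=
  fun rs θ i => if IsWinner m rs θ i then critBid m rs θ i else 0

theorem sum_mudanAlloc (rs : Finset ι) (θ : ι → Report ι) :
    ∑ i, mudanAlloc m rs θ i = #(winners m rs θ) := by
  rw [winners, card_filter]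
  rfl

theorem properS_mudan : ProperS (mudanAlloc m : MechA ι) (mudanPay m) := by
  intro rs θ _ _ i
  refine ⟨by unfold mudanAlloc; split_ifs <;> simp, fun hi => ?_⟩
  have hw : ¬ IsWinner m rs θ i := fun hw => hi hw.reachable
  simp [mudanAlloc, mudanPay, hw]

theorem nws_mudan : NWS m (mudanAlloc m : MechA ι) := by
  intro rs θ _ _
  rw [sum_mudanAlloc, card_winners]
  rfl

theorem nds_mudan : NDS (mudanPay m : MechP ι) := by
  intro rs θ _ _
  refine sum_nonneg fun i _ => ?_
  unfold mudanPay
  split_ifs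
  exacts [critBid_nonneg, le_rfl]

theorem utilS_mudan (v : ι → ℝ) (rs : Finset ι) (θ : ι → Report ι) (i : ι) (hi : 0 ≤ (θ i).1) :
    utilS v (mudanAlloc m) (mudanPay m) rs (normalizeS rs θ) i =
      if (θ i).1 ∈ winRegion m rs θ i then v i - sInf (winRegion m rs θ i) else 0 := by
  have h := agreeOnReachable_normalizeS rs θ
  simp only [utilS, mudanAlloc, mudanPay, critBid, ← h.isWinner_iff, ← h.winRegion_eq,
    mem_winRegion_self hi]
  split_ifs <;> simp

theorem ics_mudan : ICS (mudanAlloc m : MechA ι) (mudanPay m) := by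
  intro rs v r hv θ _ i v'' r'' hv'' hr''
  rw [ge_iff_le, utilS_mudan _ _ _ _ (by simpa using hv''),
    utilS_mudan _ _ _ _ (by simpa using hv i)]
  simp only [Function.update_self]
  refine ite_sub_sInf_le_ite_sub_sInf isUpperSet_winRegion bddBelow_winRegion ?_ (v i) v''
  rw [winRegion_update, winRegion_update]
  exact fun c hc => ⟨hc.1, isWinner_update_of_subset hr'' hc.2⟩

theorem irs_mudan : IRS (mudanAlloc m : MechA ι) (mudanPay m) := by
  intro rs v r hv θ _ i
  rw [utilS_mudan _ _ _ _ (by simpa using hv i)]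
  split_ifs with h
  · exact sub_nonneg.2 (csInf_le bddBelow_winRegion (by simpa using h))
  · exact le_rfl

theorem sws_mudanAlloc (v : ι → ℝ) (rs : Finset ι) (θ : ι → Report ι) :
    SWS v (mudanAlloc m) rs θ = ∑ x ∈ winners m rs θ, v x := by
  simp [SWS, mudanAlloc, winners, sum_filter]

/-- The top winner outbids everyone it cannot cut off, and it wins. -/
theorem topSum_le_sws_mudan (d : ι) {rs B : Finset ι} {v : ι → ℝ} {θ : ι → Report ι}
    (hv : ∀ k, 0 ≤ v k) (hθ : ∀ k, (θ k).1 = v k)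
    (hB : ∀ x ∈ B, ReachableAvoiding rs θ (topWinner d m rs θ) x) :
    1 / (m : ℝ) * topSum (min m #B) (B.val.map v) ≤ SWS v (mudanAlloc m) rs θ := by
  rw [sws_mudanAlloc]
  rcases (winners m rs θ).eq_empty_or_nonempty with hW | hW
  · have hB : #B ≤ #(reachableSet rs θ) := card_le_card fun x hx => by
      simpa [reachableSet] using (hB x hx).reachable
    have hk : min m #B = 0 := by
      have := card_winners (m := m) (rs := rs) (θ := θ)
      rw [hW, card_empty] at this
      omega
    rw [hk, topSum_zero, mul_zero]
    exact sum_nonneg fun x _ => hv x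
  set w := topWinner d m rs θ
  have hm : (0 : ℝ) < m := by exact_mod_cast (card_pos.2 hW).trans_le card_winners_le
  have htop : topSum (min m #B) (B.val.map v) ≤ m * v w := by
    refine (topSum_le_mul (hv w) fun x hx => ?_).trans ?_
    · obtain ⟨y, hy, rfl⟩ := Multiset.mem_map.1 hx
      rw [← hθ, ← hθ]
      exact bid_le_topWinner hW (hB y hy)
    · gcongr
      · exact hv w
      · exact_mod_cast min_le_left _ _
  calc 1 / (m : ℝ) * topSum (min m #B) (B.val.map v) ≤ 1 / m * (m * v w) := by gcongr
    _ = v w := by field_simp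
    _ ≤ ∑ x ∈ winners m rs θ, v x := single_le_sum (fun x _ => hv x) (topWinner_spec hW).1

end Mechanism

theorem mudan_exists_general (n m : ℕ) (hn : 1 ≤ n) :
    ∃ (A : MechA (Fin n)) (P : MechP (Fin n))
      (w : Finset (Fin n) → (Fin n → Report (Fin n)) → Fin n),
      ProperS A P ∧
      (∀ rs θ, ValidS θ → NormalizedS rs θ → 1 ≤ ∑ i, A rs θ i →
        A rs θ (w rs θ) = 1) ∧
      ICS A P ∧ IRS A P ∧ NDS P ∧ NWS m A ∧
      (∀ (rs : Finset (Fin n)) (v : Fin n → ℝ) (r : Fin n → Finset (Fin n)),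
        (∀ i, 0 ≤ v i) →
        (∀ i, Reachable rs (fun k => (v k, r k)) i) →
        (fun (θ : Fin n → Report (Fin n)) =>
          (fun (Bs : Finset (Fin n)) =>
            SWS v A rs θ ≥ (1 / (m : ℝ)) * topSum (min m Bs.card) (Bs.val.map v))
          (Finset.univ.filter (fun i => ∃ j ∈ rs,
            Relation.ReflTransGen (fun a b => a ≠ w rs θ ∧ b ∈ (θ a).2) j i)))
        (fun k => (v k, r k))) := by
  refine ⟨mudanAlloc m, mudanPay m, topWinner ⟨0, hn⟩ m, properS_mudan, ?_, ics_mudan,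
    irs_mudan, nds_mudan, nws_mudan,
    fun rs v r hv _ => topSum_le_sws_mudan _ hv (fun _ => rfl) fun _ hx => (mem_filter.1 hx).2⟩
  intro rs θ _ _ hsum
  rw [sum_mudanAlloc] at hsum
  simp [mudanAlloc, mem_winners.1 (topWinner_spec (card_pos.1 hsum)).1]

/-- Theorem 1 (MUDAN): for all `n ≥ 1`, `m ≥ 1` there exist a single-demand `m`-unit
diffusion-auction mechanism `(A, P)` on `n` buyers and a map `w` selecting, on every valid
normalized profile allocating at least one item, a buyer who gets an item, such that the
mechanism is IC, IR, ND, NW and `1/m`-weakly efficient: on every truthful profile with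
all buyers reachable, the social welfare is at least `1/m` times the sum of the
`min {m, |B*|}` largest true valuations over `B*`, the set of buyers reachable from the
seller by a path avoiding `w` everywhere except possibly at its endpoint. -/
theorem mudan_exists (n m : ℕ) (hn : 1 ≤ n) (hm : 1 ≤ m) :
    ∃ (A : MechA (Fin n)) (P : MechP (Fin n))
      (w : Finset (Fin n) → (Fin n → Report (Fin n)) → Fin n),
      ProperS A P ∧
      (∀ rs θ, ValidS θ → NormalizedS rs θ → 1 ≤ ∑ i, A rs θ i →
        A rs θ (w rs θ) = 1) ∧
      ICS A P ∧ IRS A P ∧ NDS P ∧ NWS m A ∧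
      (∀ (rs : Finset (Fin n)) (v : Fin n → ℝ) (r : Fin n → Finset (Fin n)),
        (∀ i, 0 ≤ v i) →
        (∀ i, Reachable rs (fun k => (v k, r k)) i) →
        (fun (θ : Fin n → Report (Fin n)) =>
          (fun (Bs : Finset (Fin n)) =>
            SWS v A rs θ ≥ (1 / (m : ℝ)) * topSum (min m Bs.card) (Bs.val.map v))
          (Finset.univ.filter (fun i => ∃ j ∈ rs,
            Relation.ReflTransGen (fun a b => a ≠ w rs θ ∧ b ∈ (θ a).2) j i)))
        (fun k => (v k, r k))) :=
  mudan_exists_general n m hn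
end

section
/- Key combinatorial identity behind the non-deficit property of MUDAR (core of Lemma 4): let m ≥ 1 and K be natural numbers and v : Fin K → ℝ be injective, and suppose that for every k < K at most m − 1 indices j < k satisfy v(j) > v(k) (each new value is among the m largest of its prefix). Then the multiset {ψ(k) : m ≤ k < K} is equal to the multiset {v(k) : k ∈ W_R}; in particular Σ_{k = m}^{K−1} ψ(k) = Σ_{k ∈ W_R} v(k). -/
open scoped Classical

/-- For a finite set `s` of reals with at least `r` elements, the `r`-th largest element
of `s` (1-based): the entry at position `r − 1` of `s` sorted in decreasing order. -/
noncomputable def kthLargest (s : Finset ℝ) (r : ℕ) : ℝ :=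
  (s.sort (· ≤ ·)).reverse.getD (r - 1) 0

/-- `ψ k`: the `(m+1)`-st largest element of the prefix `{v 0, v 1, …, v k}`. -/
noncomputable def psi {K : ℕ} (m : ℕ) (v : Fin K → ℝ) (k : ℕ) : ℝ :=
  kthLargest ((Finset.univ.filter (fun j : Fin K => (j : ℕ) ≤ k)).image v) (m + 1)

/-- `W_R`: the indices `k` such that `v k` is not among the `m` largest of all `K` values,
i.e. at least `m` indices `j` satisfy `v j > v k`. -/
noncomputable def WR {K : ℕ} (m : ℕ) (v : Fin K → ℝ) : Finset (Fin K) :=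
  Finset.univ.filter (fun k => m ≤ (Finset.univ.filter (fun j : Fin K => v k < v j)).card)

/-! For an index `j` let `c_j(k) = #(aboveUpTo v j k)` count the `i ≤ k` with `v i > v j`.
For `m ≤ k < K`, `ψ(k) = v j` exactly when `j ≤ k` and `c_j(k) = m`. The hypothesis puts each
new value `v (k + 1)` above every `v j` that already has `m` larger values before it, so once
`c_j` reaches `m` it increases strictly. As `c_j(j) ≤ m` and `c_j` grows by at most one per
step, `c_j` takes the value `m` at exactly one `k < K` if `j ∈ W_R` and never otherwise.
Thus `k ↦ j` is a bijection from `[m, K)` onto `W_R` with `ψ(k) = v j`. -/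

open Finset

theorem card_filter_orderEmbOfFin_lt {α : Type*} [LinearOrder α] (s : Finset α) {n : ℕ}
    (h : #s = n) (i : Fin n) : #{y ∈ s | s.orderEmbOfFin h i < y} = n - 1 - i := by
  set e := s.orderEmbOfFin h
  have hs : s = univ.image e := (s.image_orderEmbOfFin_univ h).symm
  rw [hs, filter_image, card_image_of_injective _ e.injective]
  simp [e.lt_iff_lt, filter_lt_eq_Ioi]

theorem kthLargest_eq_orderEmbOfFin {s : Finset ℝ} {r : ℕ} (hr : 1 ≤ r) (hrs : r ≤ #s) :
    kthLargest s r = s.orderEmbOfFin rfl ⟨#s - r, by omega⟩ := by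
  have hlen : (s.sort (· ≤ ·)).length = #s := s.length_sort _
  rw [kthLargest, List.getD_eq_getElem _ _ (by rw [List.length_reverse]; omega),
    List.getElem_reverse, orderEmbOfFin_apply]
  congr 1
  dsimp only
  omega

theorem kthLargest_mem {s : Finset ℝ} {r : ℕ} (hr : 1 ≤ r) (hrs : r ≤ #s) :
    kthLargest s r ∈ s := by
  rw [kthLargest_eq_orderEmbOfFin hr hrs]
  exact s.orderEmbOfFin_mem rfl _

theorem card_filter_kthLargest_lt {s : Finset ℝ} {r : ℕ} (hr : 1 ≤ r) (hrs : r ≤ #s) :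
    #{y ∈ s | kthLargest s r < y} = r - 1 := by
  rw [kthLargest_eq_orderEmbOfFin hr hrs, card_filter_orderEmbOfFin_lt]
  dsimp only
  omega

theorem kthLargest_eq_of_card_filter_lt {s : Finset ℝ} {r : ℕ} {x : ℝ} (hr : 1 ≤ r) (hx : x ∈ s)
    (hcard : #{y ∈ s | x < y} = r - 1) : kthLargest s r = x := by
  have hrs : r ≤ #s := by
    have : #{y ∈ s | x < y} < #s := card_lt_card (filter_ssubset.2 ⟨x, hx, lt_irrefl x⟩)
    omega
  obtain ⟨i, rfl⟩ : x ∈ Set.range (s.orderEmbOfFin rfl) := by simpa using hx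
  rw [card_filter_orderEmbOfFin_lt] at hcard
  rw [kthLargest_eq_orderEmbOfFin hr hrs]
  congr
  omega

theorem Nat.exists_eq_of_succ_le_add_one {f : ℕ → ℕ} (hf : ∀ n, f (n + 1) ≤ f n + 1)
    {a b c : ℕ} (hab : a ≤ b) (ha : f a ≤ c) (hb : c ≤ f b) :
    ∃ n, a ≤ n ∧ n ≤ b ∧ f n = c := by
  induction b, hab using Nat.le_induction with
  | base => exact ⟨a, le_rfl, le_rfl, le_antisymm ha hb⟩
  | succ b hab ih =>
    by_cases hcb : c ≤ f b
    · obtain ⟨n, han, hnb, hn⟩ := ih hcb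
      exact ⟨n, han, hnb.trans b.le_succ, hn⟩
    · exact ⟨b + 1, hab.trans b.le_succ, le_rfl, by have := hf b; omega⟩

section aboveUpTo

variable {α : Type*} [LinearOrder α] {K : ℕ} (v : Fin K → α)

def aboveUpTo (j : Fin K) (k : ℕ) : Finset (Fin K) :=
  {i | (i : ℕ) ≤ k ∧ v j < v i}

variable {v} in
@[simp]
theorem mem_aboveUpTo {i j : Fin K} {k : ℕ} : i ∈ aboveUpTo v j k ↔ (i : ℕ) ≤ k ∧ v j < v i := by
  simp [aboveUpTo]

theorem card_aboveUpTo_mono (j : Fin K) : Monotone fun k => #(aboveUpTo v j k) :=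
  fun _ _ hkk' => card_le_card fun i hi => by
    rw [mem_aboveUpTo] at hi ⊢
    exact ⟨hi.1.trans hkk', hi.2⟩

theorem card_aboveUpTo_succ_le (j : Fin K) (k : ℕ) :
    #(aboveUpTo v j (k + 1)) ≤ #(aboveUpTo v j k) + 1 :=
  calc #(aboveUpTo v j (k + 1))
      ≤ #(aboveUpTo v j k ∪ univ.filter fun i : Fin K => (i : ℕ) = k + 1) := by
        refine card_le_card fun i hi => ?_
        rw [mem_aboveUpTo] at hi
        rw [mem_union, mem_aboveUpTo, mem_filter]
        rcases Nat.lt_or_eq_of_le hi.1 with h | h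
        · exact .inl ⟨Nat.le_of_lt_succ h, hi.2⟩
        · exact .inr ⟨mem_univ _, h⟩
    _ ≤ #(aboveUpTo v j k) + #(univ.filter fun i : Fin K => (i : ℕ) = k + 1) :=
        card_union_le _ _
    _ ≤ #(aboveUpTo v j k) + 1 := by
        gcongr
        exact card_le_one.2 fun a ha b hb => Fin.ext (by simp only [mem_filter] at ha hb; omega)

theorem aboveUpTo_of_le {j : Fin K} {k : ℕ} (hk : K ≤ k + 1) :
    aboveUpTo v j k = univ.filter fun i => v j < v i := by
  ext i
  simp only [mem_aboveUpTo, mem_filter, mem_univ, true_and, and_iff_right_iff_imp]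
  exact fun _ => by omega

theorem card_aboveUpTo_le {j : Fin K} {k : ℕ} (hjk : (j : ℕ) ≤ k) : #(aboveUpTo v j k) ≤ k := by
  refine (card_le_card_of_injOn Fin.val (t := (range (k + 1)).erase j) (fun i hi => ?_)
    Fin.val_injective.injOn).trans (by simp [card_erase_of_mem, hjk])
  simp only [mem_coe, mem_aboveUpTo, coe_erase, coe_range, Set.mem_sdiff, Set.mem_Iio,
    Order.lt_add_one_iff, Set.mem_singleton_iff] at hi ⊢
  exact ⟨hi.1, fun h => hi.2.ne (congrArg v (Fin.ext h)).symm⟩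

variable {v} {m : ℕ}
  (hpre : ∀ k : Fin K, #{j : Fin K | (j : ℕ) < (k : ℕ) ∧ v k < v j} ≤ m - 1)
include hpre

theorem card_aboveUpTo_self_le (j : Fin K) : #(aboveUpTo v j j) ≤ m - 1 := by
  refine (card_le_card fun i hi => ?_).trans (hpre j)
  rw [mem_aboveUpTo] at hi
  simp only [mem_filter, mem_univ, true_and]
  exact ⟨hi.1.lt_of_ne fun h => hi.2.ne (congrArg v (Fin.ext h)).symm, hi.2⟩

theorem aboveUpTo_succ (hv : Function.Injective v) {j : Fin K} {k : ℕ} (hjk : (j : ℕ) ≤ k)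
    (hk : k + 1 < K) (hm : m ≤ #(aboveUpTo v j k)) :
    aboveUpTo v j (k + 1) = insert ⟨k + 1, hk⟩ (aboveUpTo v j k) := by
  set a : Fin K := ⟨k + 1, hk⟩
  have ha : (a : ℕ) = k + 1 := rfl
  -- otherwise `v j` and the `≥ m` values above it would all precede `a` and beat `v a`
  have hlt : v j < v a := by
    by_contra! hle
    have hgt : v a < v j := hle.lt_of_ne (hv.ne (Fin.ne_of_val_ne (by omega)))
    have hsub : insert j (aboveUpTo v j k)
        ⊆ univ.filter fun i : Fin K => (i : ℕ) < a ∧ v a < v i := by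
      intro i hi
      simp only [mem_insert, mem_aboveUpTo, mem_filter, mem_univ, true_and] at hi ⊢
      rcases hi with rfl | hi
      · exact ⟨by omega, hgt⟩
      · exact ⟨by omega, hgt.trans hi.2⟩
    have := (card_le_card hsub).trans (hpre a)
    rw [card_insert_of_notMem (by simp)] at this
    omega
  ext i
  simp only [mem_insert, mem_aboveUpTo, a, Fin.ext_iff]
  constructor
  · rintro ⟨hi, hji⟩
    rcases Nat.lt_or_eq_of_le hi with hi | hi
    · exact .inr ⟨by omega, hji⟩
    · exact .inl hi
  · rintro (hi | hi)
    · obtain rfl : i = a := Fin.ext (hi.trans ha.symm)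
      exact ⟨hi.le, hlt⟩
    · exact ⟨by omega, hi.2⟩

theorem card_aboveUpTo_lt (hv : Function.Injective v) {j : Fin K} {k k' : ℕ} (hjk : (j : ℕ) ≤ k)
    (hm : m ≤ #(aboveUpTo v j k)) (hkk' : k < k') (hk' : k' < K) :
    #(aboveUpTo v j k) < #(aboveUpTo v j k') :=
  calc #(aboveUpTo v j k) < #(aboveUpTo v j (k + 1)) := by
        rw [aboveUpTo_succ hpre hv hjk (by omega) hm, card_insert_of_notMem (by simp)]
        omega
    _ ≤ #(aboveUpTo v j k') := card_aboveUpTo_mono v j hkk'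

end aboveUpTo

section psi

variable {K m : ℕ} {v : Fin K → ℝ}

theorem card_filter_image_prefix_lt (hv : Function.Injective v) (j : Fin K) (k : ℕ) :
    #{y ∈ (univ.filter fun i : Fin K => (i : ℕ) ≤ k).image v | v j < y} = #(aboveUpTo v j k) := by
  rw [filter_image, card_image_of_injective _ hv, filter_filter]
  rfl

theorem card_image_prefix (hv : Function.Injective v) {k : ℕ} (hk : k < K) :
    #((univ.filter fun i : Fin K => (i : ℕ) ≤ k).image v) = k + 1 := by
  simp_rw [card_image_of_injective _ hv, ← Nat.lt_succ_iff, Fin.card_filter_val_lt]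
  omega

theorem psi_eq_of_card_aboveUpTo (hv : Function.Injective v) {j : Fin K} {k : ℕ}
    (hjk : (j : ℕ) ≤ k) (hcard : #(aboveUpTo v j k) = m) : psi m v k = v j :=
  kthLargest_eq_of_card_filter_lt (by omega) (mem_image_of_mem v (by simpa using hjk))
    (by rw [card_filter_image_prefix_lt hv, hcard]; rfl)

theorem exists_psi_eq (hv : Function.Injective v) {k : ℕ} (hmk : m ≤ k) (hk : k < K) :
    ∃ j : Fin K, (j : ℕ) ≤ k ∧ #(aboveUpTo v j k) = m ∧ psi m v k = v j := by
  have hcard := card_image_prefix hv hk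
  obtain ⟨j, hj, hjψ⟩ := mem_image.1 (kthLargest_mem (by omega) (by omega) :
    psi m v k ∈ (univ.filter fun i : Fin K => (i : ℕ) ≤ k).image v)
  refine ⟨j, by simpa using hj, ?_, hjψ.symm⟩
  rw [← card_filter_image_prefix_lt hv, hjψ]
  exact card_filter_kthLargest_lt (by omega) (by omega)

variable (hpre : ∀ k : Fin K, #{j : Fin K | (j : ℕ) < (k : ℕ) ∧ v k < v j} ≤ m - 1)
include hpre

theorem mem_WR_iff {j : Fin K} :
    j ∈ WR m v ↔ ∃ k, (j : ℕ) ≤ k ∧ k < K ∧ #(aboveUpTo v j k) = m := by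
  have htotal : #(aboveUpTo v j (K - 1)) = #(univ.filter fun i => v j < v i) := by
    rw [aboveUpTo_of_le v (by omega)]
  simp only [WR, mem_filter, mem_univ, true_and, ← htotal]
  constructor
  · intro hm
    obtain ⟨k, hjk, hkK, hk⟩ := Nat.exists_eq_of_succ_le_add_one
      (f := fun k => #(aboveUpTo v j k)) (card_aboveUpTo_succ_le v j)
      (by omega : (j : ℕ) ≤ K - 1) ((card_aboveUpTo_self_le hpre j).trans (Nat.sub_le m 1)) hm
    exact ⟨k, hjk, by omega, hk⟩
  · rintro ⟨k, -, hkK, hk⟩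
    exact hk ▸ card_aboveUpTo_mono v j (by omega : k ≤ K - 1)

theorem injOn_psi_Ico (hv : Function.Injective v) : Set.InjOn (psi m v) (Ico m K) := by
  intro k hk k' hk' h
  simp only [coe_Ico, Set.mem_Ico] at hk hk'
  obtain ⟨j, hjk, hcard, hψ⟩ := exists_psi_eq hv hk.1 hk.2
  obtain ⟨j', hjk', hcard', hψ'⟩ := exists_psi_eq hv hk'.1 hk'.2
  obtain rfl : j = j' := hv (hψ.symm.trans (h.trans hψ'))
  by_contra hne
  rcases Nat.lt_or_gt_of_ne hne with hlt | hlt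
  · exact (card_aboveUpTo_lt hpre hv hjk hcard.ge hlt hk'.2).ne (hcard.trans hcard'.symm)
  · exact (card_aboveUpTo_lt hpre hv hjk' hcard'.ge hlt hk.2).ne (hcard'.trans hcard.symm)

theorem image_psi_Ico (hv : Function.Injective v) :
    (Ico m K).image (psi m v) = (WR m v).image v := by
  ext x
  simp only [mem_image, mem_Ico]
  constructor
  · rintro ⟨k, ⟨hmk, hkK⟩, rfl⟩
    obtain ⟨j, hjk, hcard, hψ⟩ := exists_psi_eq hv hmk hkK
    exact ⟨j, (mem_WR_iff hpre).2 ⟨k, hjk, hkK, hcard⟩, hψ.symm⟩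
  · rintro ⟨j, hj, rfl⟩
    obtain ⟨k, hjk, hkK, hcard⟩ := (mem_WR_iff hpre).1 hj
    exact ⟨k, ⟨hcard ▸ card_aboveUpTo_le v hjk, hkK⟩, psi_eq_of_card_aboveUpTo hv hjk hcard⟩

end psi

theorem psi_multiset_eq_WR_general (m K : ℕ) (v : Fin K → ℝ)
    (hv : Function.Injective v)
    (hpre : ∀ k : Fin K,
      (Finset.univ.filter (fun j : Fin K => (j : ℕ) < (k : ℕ) ∧ v k < v j)).card ≤ m - 1) :
    (Finset.Ico m K).val.map (psi m v) = (WR m v).val.map v ∧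
      ∑ k ∈ Finset.Ico m K, psi m v k = ∑ k ∈ WR m v, v k := by
  have hmap : (Ico m K).val.map (psi m v) = (WR m v).val.map v := by
    rw [← image_val_of_injOn (injOn_psi_Ico hpre hv), image_psi_Ico hpre hv,
      image_val_of_injOn hv.injOn]
  exact ⟨hmap, congrArg Multiset.sum hmap⟩

/-- Key combinatorial identity behind the non-deficit property of MUDAR (core of Lemma 4):
if `v : Fin K → ℝ` is injective and each new value is among the `m` largest of its prefix,
then the multiset `{ψ k : m ≤ k < K}` equals the multiset `{v k : k ∈ W_R}`; in
particular, the corresponding sums agree. -/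
theorem psi_multiset_eq_WR (m K : ℕ) (hm : 1 ≤ m) (v : Fin K → ℝ)
    (hv : Function.Injective v)
    (hpre : ∀ k : Fin K,
      (Finset.univ.filter (fun j : Fin K => (j : ℕ) < (k : ℕ) ∧ v k < v j)).card ≤ m - 1) :
    (Finset.Ico m K).val.map (psi m v) = (WR m v).val.map v ∧
      ∑ k ∈ Finset.Ico m K, psi m v k = ∑ k ∈ WR m v, v k :=
  psi_multiset_eq_WR_general m K v hv hpre
end

section
/- Bumping lemma for prefix order statistics (intermediate step in the non-deficit proof of MUDAR): let m ≥ 1 and K be natural numbers, v : Fin K → ℝ injective, and let k satisfy m ≤ k < K. If at most m − 1 indices j < k satisfy v(j) > v(k), then the (m+1)-st largest element of {v(0), …, v(k)} equals the m-th largest element of {v(0), …, v(k−1)}. -/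
open scoped Classical

/-!
In the decreasing enumeration of `insert x t`, the entries in front of `x` are exactly the
elements of `t` above `x`, so `x` sits at a position `< m`. Deleting it shifts every later
entry one place forward, and the `(m+1)`-st entry of the longer list becomes the `m`-th entry
of the decreasing enumeration of `t`. For the prefix sets this is the case `x = v k`,
`t = {v 0, …, v (k-1)}`.
-/

open Finset

theorem List.SortedGT.getElem?_erase_of_length_filter_le {α : Type*} [LinearOrder α]
    {l : List α} (hl : l.SortedGT) {x : α} (hx : x ∈ l) {n : ℕ}
    (hn : (l.filter (x < ·)).length ≤ n) : (l.erase x)[n]? = l[n + 1]? := by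
  obtain ⟨A, B, rfl⟩ := List.append_of_mem hx
  have hA : ∀ a ∈ A, x < a := fun a ha =>
    (List.pairwise_append.mp hl.pairwise).2.2 a ha x List.mem_cons_self
  have hxA : x ∉ A := fun h => (hA x h).false
  have hlen : A.length ≤ n := by
    refine le_trans ?_ hn
    rw [List.filter_append, List.length_append, List.filter_eq_self.mpr (by simpa using hA)]
    omega
  rw [List.erase_append_right _ hxA, List.erase_cons_head, List.getElem?_append_right hlen,
    List.getElem?_append_right (by omega), Nat.sub_add_comm hlen, List.getElem?_cons_succ]

theorem kthLargest_insert_of_card_filter_lt {t : Finset ℝ} {x : ℝ} (hx : x ∉ t) {m : ℕ}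
    (hm : #{y ∈ t | x < y} < m) : kthLargest (insert x t) (m + 1) = kthLargest t m := by
  obtain ⟨n, rfl⟩ : ∃ n, m = n + 1 := Nat.exists_eq_succ_of_ne_zero (by omega)
  unfold kthLargest
  set L := ((insert x t).sort (· ≤ ·)).reverse
  have hL : L.SortedGT := (sortedLT_sort _).reverse
  have hxL : x ∈ L := by simp [L]
  have herase : (t.sort (· ≤ ·)).reverse = L.erase x :=
    (sortedLT_sort t).reverse.eq_of_mem_iff (hL.pairwise.sublist List.erase_sublist).sortedGT
      fun y => by grind [hL.nodup.mem_erase_iff, mem_sort]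
  have hcount : (L.filter (x < ·)).length ≤ n := by
    rw [← List.toFinset_card_of_nodup (hL.nodup.filter _), List.toFinset_filter]
    simpa [L, filter_insert] using hm
  simp only [List.getD_eq_getElem?_getD, Nat.add_sub_cancel, herase,
    hL.getElem?_erase_of_length_filter_le hxL hcount]

theorem bumping_lemma_general (m K : ℕ) (hm : 1 ≤ m) (v : Fin K → ℝ)
    (hv : Function.Injective v) (k : ℕ) (hk2 : k < K)
    (h : (Finset.univ.filter
        (fun j : Fin K => (j : ℕ) < k ∧ v ⟨k, hk2⟩ < v j)).card ≤ m - 1) :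
    kthLargest ((Finset.univ.filter (fun j : Fin K => (j : ℕ) ≤ k)).image v) (m + 1) =
      kthLargest ((Finset.univ.filter (fun j : Fin K => (j : ℕ) < k)).image v) m := by
  have hprefix : (univ.filter fun j : Fin K => (j : ℕ) ≤ k) =
      insert ⟨k, hk2⟩ (univ.filter fun j : Fin K => (j : ℕ) < k) := by
    ext j
    simp [Fin.ext_iff, le_iff_eq_or_lt]
  have hnew : v ⟨k, hk2⟩ ∉ (univ.filter fun j : Fin K => (j : ℕ) < k).image v := by
    simp [hv.mem_finset_image]
  have habove :
      #{y ∈ (univ.filter fun j : Fin K => (j : ℕ) < k).image v | v ⟨k, hk2⟩ < y} < m := by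
    rw [filter_image, filter_filter, card_image_of_injective _ hv]
    omega
  rw [hprefix, image_insert]
  exact kthLargest_insert_of_card_filter_lt hnew habove

/-- Bumping lemma for prefix order statistics: if `m ≤ k < K`, `v` is injective, and at
most `m − 1` indices `j < k` satisfy `v j > v k`, then the `(m+1)`-st largest element of
`{v 0, …, v k}` equals the `m`-th largest element of `{v 0, …, v (k−1)}`. -/
theorem bumping_lemma (m K : ℕ) (hm : 1 ≤ m) (v : Fin K → ℝ)
    (hv : Function.Injective v) (k : ℕ) (hk1 : m ≤ k) (hk2 : k < K)
    (h : (Finset.univ.filter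
        (fun j : Fin K => (j : ℕ) < k ∧ v ⟨k, hk2⟩ < v j)).card ≤ m - 1) :
    kthLargest ((Finset.univ.filter (fun j : Fin K => (j : ℕ) ≤ k)).image v) (m + 1) =
      kthLargest ((Finset.univ.filter (fun j : Fin K => (j : ℕ) < k)).image v) m :=
  bumping_lemma_general m K hm v hv k hk2 h
end

section
/- Reachability correspondence for the multi-to-single-demand reduction: for every normalized multi-demand global profile η' with constructed single-demand profile θ' on B̃ = B × {1,…,m}, a buyer i ∈ B is reachable from the seller s in G_{η'} if and only if (i,1) is reachable from s in the constructed graph of θ', if and only if (i,j) is reachable from s in that graph for every 1 ≤ j ≤ m. Consequently, the number of reachable buyers of B̃ equals m times the number of reachable buyers of B. -/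
open scoped Classical

/-- A multi-demand report: a valuation vector and a neighbour set. -/
abbrev MReport (n m : ℕ) := (Fin m → ℝ) × Finset (Fin n)

/-- A valid valuation vector: non-negative and nonincreasing (diminishing valuations). -/
def ValidVec {m : ℕ} (w : Fin m → ℝ) : Prop := (∀ j, 0 ≤ w j) ∧ Antitone w

/-- Buyer `i` is reachable from the seller in the multi-demand profile graph. -/
def MReachable {n m : ℕ} (ts : Finset (Fin n)) (η : Fin n → MReport n m) (i : Fin n) :
    Prop :=
  ∃ j ∈ ts, Relation.ReflTransGen (fun a b => b ∈ (η a).2) j i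

/-- Normalization: unreachable buyers get the silent report `((0,…,0), ∅)`. -/
noncomputable def mnormalize {n m : ℕ} (ts : Finset (Fin n)) (η : Fin n → MReport n m) :
    Fin n → MReport n m :=
  fun i => if MReachable ts η i then η i else (fun _ => 0, (∅ : Finset (Fin n)))

/-- All reported valuation vectors are valid. -/
def MValid {n m : ℕ} (η : Fin n → MReport n m) : Prop := ∀ i, ValidVec (η i).1

/-- The multi-demand profile is normalized. -/
def MNormalized {n m : ℕ} (ts : Finset (Fin n)) (η : Fin n → MReport n m) : Prop :=
  mnormalize ts η = η

/-- Allocation rule of a multi-demand mechanism (0/1 per buyer and item index). -/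
abbrev MMechA (n m : ℕ) := Finset (Fin n) → (Fin n → MReport n m) → Fin n → Fin m → ℕ

/-- Payment rule of a multi-demand mechanism. -/
abbrev MMechP (n m : ℕ) := Finset (Fin n) → (Fin n → MReport n m) → Fin n → Fin m → ℝ

/-- The mechanism allocates 0/1 per entry and gives unreachable buyers zero allocation
and zero payments (on valid normalized profiles). -/
def MProper {n m : ℕ} (A : MMechA n m) (P : MMechP n m) : Prop :=
  ∀ ts η, MValid η → MNormalized ts η → ∀ i,
    (∀ j, A ts η i j ≤ 1) ∧
    (¬ MReachable ts η i → ∀ j, A ts η i j = 0 ∧ P ts η i j = 0)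

/-- Utility of buyer `i` with true valuation vectors `v`. -/
noncomputable def Mutil {n m : ℕ} (v : Fin n → Fin m → ℝ) (A : MMechA n m)
    (P : MMechP n m) (ts : Finset (Fin n)) (η : Fin n → MReport n m) (i : Fin n) : ℝ :=
  ∑ j, (v i j * (A ts η i j : ℝ) - P ts η i j)

/-- Social welfare with true valuation vectors `v`. -/
noncomputable def MSW {n m : ℕ} (v : Fin n → Fin m → ℝ) (A : MMechA n m)
    (ts : Finset (Fin n)) (η : Fin n → MReport n m) : ℝ :=
  ∑ i, ∑ j, v i j * (A ts η i j : ℝ)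

/-- Revenue of the seller. -/
noncomputable def MRV {n m : ℕ} (P : MMechP n m) (ts : Finset (Fin n))
    (η : Fin n → MReport n m) : ℝ :=
  ∑ i, ∑ j, P ts η i j

/-- Incentive compatibility for the multi-demand model. -/
def MIC {n m : ℕ} (A : MMechA n m) (P : MMechP n m) : Prop :=
  ∀ (ts : Finset (Fin n)) (v : Fin n → Fin m → ℝ) (t : Fin n → Finset (Fin n)),
    (∀ i, ValidVec (v i)) →
    ∀ η : Fin n → MReport n m, (∀ j, ValidVec (η j).1 ∧ (η j).2 ⊆ t j) →
    ∀ (i : Fin n) (v'' : Fin m → ℝ) (t'' : Finset (Fin n)),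
      ValidVec v'' → t'' ⊆ t i →
      Mutil v A P ts (mnormalize ts (Function.update η i (v i, t i))) i ≥
        Mutil v A P ts (mnormalize ts (Function.update η i (v'', t''))) i

/-- Individual rationality for the multi-demand model. -/
def MIR {n m : ℕ} (A : MMechA n m) (P : MMechP n m) : Prop :=
  ∀ (ts : Finset (Fin n)) (v : Fin n → Fin m → ℝ) (t : Fin n → Finset (Fin n)),
    (∀ i, ValidVec (v i)) →
    ∀ η : Fin n → MReport n m, (∀ j, ValidVec (η j).1 ∧ (η j).2 ⊆ t j) →
    ∀ i : Fin n, 0 ≤ Mutil v A P ts (mnormalize ts (Function.update η i (v i, t i))) i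

/-- Non-deficit for the multi-demand model. -/
def MND {n m : ℕ} (P : MMechP n m) : Prop :=
  ∀ ts η, MValid η → MNormalized ts η → 0 ≤ MRV P ts η

/-- Non-wastefulness for the multi-demand `m`-unit auction. -/
def MNW {n m : ℕ} (A : MMechA n m) : Prop :=
  ∀ ts η, MValid η → MNormalized ts η →
    ∑ i, ∑ j, A ts η i j =
      min m (m * (Finset.univ.filter (fun i => MReachable ts η i)).card)

/-- The seller's neighbour set in the constructed single-demand profile on
`B̃ = Fin n × Fin m`: the copies `(i, 0)` of the seller's multi-demand neighbours. -/
def liftSeller {n m : ℕ} (hm : 0 < m) (ts : Finset (Fin n)) : Finset (Fin n × Fin m) :=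
  ts.image (fun i => (i, ⟨0, hm⟩))

/-- The constructed single-demand profile on `B̃ = Fin n × Fin m` from a multi-demand
profile `η`: buyer `(i, j)` reports valuation `(η i).1 j`, and its neighbour set is
`{(i, j+1)}` if `j + 1 < m`, and `{(k, 0) : k ∈ (η i).2}` if `j` is the last index. -/
def liftProfile {n m : ℕ} (hm : 0 < m) (η : Fin n → MReport n m) :
    Fin n × Fin m → Report (Fin n × Fin m) :=
  fun b => ((η b.1).1 b.2,
    if h : (b.2 : ℕ) + 1 < m then {(b.1, ⟨(b.2 : ℕ) + 1, h⟩)}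
    else ((η b.1).2).image (fun k => (k, (⟨0, hm⟩ : Fin m))))

/-! Each buyer `i` becomes the chain `(i, 0) → (i, 1) → ⋯ → (i, m - 1)`, and an edge
`i → k` of the multi-demand graph becomes the edge `(i, m - 1) → (k, 0)`. Hence every path
of the constructed graph projects onto a path of the multi-demand graph, and every path of
the multi-demand graph lifts through the chains; so `(i, j)` is reachable exactly when `i`
is. -/

section LiftProfile

variable {n m : ℕ} (hm : 0 < m) (η : Fin n → MReport n m)

def liftEdge (a b : Fin n × Fin m) : Prop := b ∈ (liftProfile hm η a).2

theorem liftEdge_reflTransGen_chain (i : Fin n) :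
    ∀ (k : ℕ) (hk : k < m),
      Relation.ReflTransGen (liftEdge hm η) (i, ⟨0, hm⟩) (i, ⟨k, hk⟩)
  | 0, _ => .refl
  | k + 1, hk => (liftEdge_reflTransGen_chain i k (Nat.lt_of_succ_lt hk)).tail <| by
      simp only [liftEdge, liftProfile, dif_pos hk, Finset.mem_singleton]

theorem liftEdge_reflTransGen_of_mem {a b : Fin n} (hab : b ∈ (η a).2) :
    Relation.ReflTransGen (liftEdge hm η) (a, ⟨0, hm⟩) (b, ⟨0, hm⟩) :=
  (liftEdge_reflTransGen_chain hm η a (m - 1) (Nat.sub_lt hm Nat.one_pos)).tail <| by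
    simp only [liftEdge, liftProfile, dif_neg (show ¬m - 1 + 1 < m by omega)]
    exact Finset.mem_image_of_mem _ hab

theorem liftEdge_reflTransGen_fst {a b : Fin n × Fin m}
    (h : Relation.ReflTransGen (liftEdge hm η) a b) :
    Relation.ReflTransGen (fun a b => b ∈ (η a).2) a.1 b.1 := by
  refine h.lift' Prod.fst fun c d hcd => ?_
  simp only [liftEdge, liftProfile] at hcd
  split_ifs at hcd
  · rw [Finset.mem_singleton.1 hcd]
  · obtain ⟨k, hk, rfl⟩ := Finset.mem_image.1 hcd
    exact .single hk

theorem reachable_liftProfile_iff (ts : Finset (Fin n)) (b : Fin n × Fin m) :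
    Reachable (liftSeller hm ts) (liftProfile hm η) b ↔ MReachable ts η b.1 := by
  constructor
  · rintro ⟨_, hs, hpath⟩
    obtain ⟨k, hk, rfl⟩ := Finset.mem_image.1 hs
    exact ⟨k, hk, liftEdge_reflTransGen_fst hm η hpath⟩
  · rintro ⟨k, hk, hpath⟩
    have hzero : Relation.ReflTransGen (liftEdge hm η) (k, ⟨0, hm⟩) (b.1, ⟨0, hm⟩) :=
      hpath.lift' (fun i => ((i, ⟨0, hm⟩) : Fin n × Fin m)) fun _ _ =>
        liftEdge_reflTransGen_of_mem hm η
    exact ⟨(k, ⟨0, hm⟩), Finset.mem_image_of_mem _ hk,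
      hzero.trans (liftEdge_reflTransGen_chain hm η b.1 b.2 b.2.isLt)⟩

end LiftProfile

theorem reduction_reachability_general (n m : ℕ) (hm : 0 < m) (ts : Finset (Fin n))
    (η : Fin n → MReport n m) :
    (∀ i : Fin n,
      (MReachable ts η i ↔
        Reachable (liftSeller hm ts) (liftProfile hm η) (i, ⟨0, hm⟩)) ∧
      (MReachable ts η i ↔
        ∀ j : Fin m, Reachable (liftSeller hm ts) (liftProfile hm η) (i, j))) ∧
    (Finset.univ.filter
        (fun b : Fin n × Fin m => Reachable (liftSeller hm ts) (liftProfile hm η) b)).card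
      = m * (Finset.univ.filter (fun i : Fin n => MReachable ts η i)).card := by
  have hlift := reachable_liftProfile_iff hm η ts
  refine ⟨fun i => ⟨(hlift (i, ⟨0, hm⟩)).symm, fun h j => (hlift (i, j)).2 h,
    fun h => (hlift (i, ⟨0, hm⟩)).1 (h ⟨0, hm⟩)⟩, ?_⟩
  have hprod : Finset.univ.filter (fun b => Reachable (liftSeller hm ts) (liftProfile hm η) b) =
      Finset.univ.filter (fun i => MReachable ts η i) ×ˢ (Finset.univ : Finset (Fin m)) := by
    ext b
    simp [hlift]
  rw [hprod, Finset.card_product, Finset.card_univ, Fintype.card_fin, mul_comm]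

/-- Reachability correspondence for the multi-to-single-demand reduction: a buyer `i` is
reachable in the multi-demand profile graph iff `(i, 0)` is reachable in the constructed
single-demand graph, iff `(i, j)` is reachable for every `j`; consequently the number of
reachable buyers of `B̃ = Fin n × Fin m` is `m` times the number of reachable buyers. -/
theorem reduction_reachability (n m : ℕ) (hm : 0 < m) (ts : Finset (Fin n))
    (η : Fin n → MReport n m) (hnorm : MNormalized ts η) :
    (∀ i : Fin n,
      (MReachable ts η i ↔
        Reachable (liftSeller hm ts) (liftProfile hm η) (i, ⟨0, hm⟩)) ∧
      (MReachable ts η i ↔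
        ∀ j : Fin m, Reachable (liftSeller hm ts) (liftProfile hm η) (i, j))) ∧
    (Finset.univ.filter
        (fun b : Fin n × Fin m => Reachable (liftSeller hm ts) (liftProfile hm η) b)).card
      = m * (Finset.univ.filter (fun i : Fin n => MReachable ts η i)).card :=
  reduction_reachability_general n m hm ts η
end
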